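/- Let Σ, Γ be finite types with decidable equality and let f : List Σ → List Γ be a regular function (in the padded-convolution sense). Then there exist a constant c : ℕ and a length-preserving regular function g : List (Option Σ) → List (Option Γ) such that for every w : List Σ, (f w).length ≤ w.length + c and g (w.map some ++ List.replicate c none) = (f w).map some ++ List.replicate (w.length + c - (f w).length) none. -/

import Mathlib

/-- `tuplefy w v` combines two words in parallel into a word of pairs of length
`max w.length v.length`, padding missing entries with `none`. -/
def tuplefy {A G : Type*} (w : List A) (v : List G) : List (Option A × Option G) :=
  (List.range (max w.length v.length)).map fun i => (w[i]?, v[i]?)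

/-!
Let `M` be a DFA with `κ` states recognising the convolutions `tuplefy w (f w)`. If
`|f w| > |w| + κ`, the convolution ends in more than `κ` letters whose first component is
`none`; cutting a loop of `M` out of that tail yields another accepted word, i.e. another
convolution, with the same first component, hence equal to `tuplefy w (f w)` although it is
shorter. So `|f w| ≤ |w| + κ`, and with `c = κ` the word `w` padded by `c` blanks is long
enough to carry `f w` padded to the same length. The graph of the resulting length-preserving
function is a Boolean combination of regular languages: on inputs of the form `w ⬝ none^c` it is
the set of convolutions of `f` followed by blank pairs, elsewhere the set of words whose second
component is blank.
-/

namespace List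

variable {α β : Type*}

theorem reduceOption_map_some_append_replicate (w : List α) (k : ℕ) :
    (w.map some ++ replicate k none).reduceOption = w := by
  simp [reduceOption, filterMap_map]

theorem exists_eq_map_some_of_forall_isSome {x : List (Option α)} (h : ∀ y ∈ x, y.isSome) :
    ∃ w : List α, x = w.map some :=
  ⟨x.pmap Option.get h, by simp [map_pmap]⟩

theorem ext_map_fst_map_snd {u u' : List (α × β)} (h₁ : u.map Prod.fst = u'.map Prod.fst)
    (h₂ : u.map Prod.snd = u'.map Prod.snd) : u = u' :=
  (zip_of_prod h₁ h₂).trans (zip_of_prod rfl rfl).symm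

theorem map_getElem?_range {w : List α} {n : ℕ} (h : w.length ≤ n) :
    (range n).map (fun i => w[i]?) = w.map some ++ replicate (n - w.length) none :=
  ext_getElem? fun i => by grind

end List

namespace Language

variable {α β : Type*}

def appendReplicate (L : Language α) (a : α) : Language α :=
  {u | ∃ x ∈ L, ∃ m, u = x ++ List.replicate m a}

theorem isRegular_of_snoc {σ : Type} [Fintype σ] (φ : List α → σ) (step : σ → α → σ)
    (hstep : ∀ u a, φ (u ++ [a]) = step (φ u) a) (S : Set σ) :
    IsRegular ({u | φ u ∈ S} : Language α) := by
  have heval : ∀ u, (⟨step, φ [], S⟩ : DFA α σ).eval u = φ u := by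
    intro u
    induction u using List.reverseRecOn with
    | nil => rfl
    | append_singleton u a ih => rw [DFA.eval_append_singleton, ih, hstep]
  exact ⟨σ, inferInstance, ⟨step, φ [], S⟩,
    Set.ext fun u => Iff.of_eq (congrArg (· ∈ S) (heval u))⟩

theorem isRegular_setOf_forall_mem (q : α → Prop) :
    IsRegular ({u | ∀ x ∈ u, q x} : Language α) :=
  isRegular_of_snoc (fun u => ∀ x ∈ u, q x) (fun s a => s ∧ q a)
    (fun u a => by simp [or_imp, forall_and]) {s | s}

theorem isRegular_setOf_countP_eq (p : α → Bool) (c : ℕ) :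
    IsRegular ({u | u.countP p = c} : Language α) := by
  have h := isRegular_of_snoc (σ := Fin (c + 2))
    (fun u => ⟨min (u.countP p) (c + 1), by omega⟩)
    (fun s a => ⟨min (s + if p a then 1 else 0) (c + 1), by omega⟩)
    (fun u a => by ext; simp only [List.countP_append, List.countP_singleton]; omega)
    {s | s.val = c}
  refine (congrArg IsRegular (Set.ext fun u => ?_)).mp h
  show min (u.countP p) (c + 1) = c ↔ u.countP p = c
  omega

theorem IsRegular.preimage_map {L : Language α} (hL : L.IsRegular) (f : β → α) :
    IsRegular (List.map f ⁻¹' L : Language β) := by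
  obtain ⟨σ, _, M, rfl⟩ := hL
  exact ⟨σ, inferInstance, M.comap f, M.accepts_comap f⟩

theorem append_singleton_mem_appendReplicate {L : Language α} {a b : α} {u : List α} :
    u ++ [b] ∈ L.appendReplicate a ↔ (u ∈ L.appendReplicate a ∧ b = a) ∨ u ++ [b] ∈ L := by
  constructor
  · rintro ⟨x, hx, _ | m, h⟩
    · exact Or.inr (by simpa [h] using hx)
    · rw [List.replicate_succ', ← List.append_assoc] at h
      obtain ⟨rfl, h⟩ := List.append_inj' h rfl
      exact Or.inl ⟨⟨x, hx, m, rfl⟩, by simpa using h⟩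
  · rintro (⟨⟨x, hx, m, rfl⟩, rfl⟩ | h)
    · exact ⟨x, hx, m + 1, by simp [List.replicate_succ']⟩
    · exact ⟨u ++ [b], h, 0, by simp⟩

theorem IsRegular.appendReplicate {L : Language α} (hL : L.IsRegular) (a : α) :
    (L.appendReplicate a).IsRegular := by
  obtain ⟨σ, _, M, rfl⟩ := hL
  exact isRegular_of_snoc (fun u => (M.eval u, u ∈ M.accepts.appendReplicate a))
    (fun s b => (M.step s.1 b, (s.2 ∧ b = a) ∨ M.step s.1 b ∈ M.accept))
    (fun u b => by
      rw [append_singleton_mem_appendReplicate, DFA.mem_accepts, DFA.eval_append_singleton])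
    {s | s.2}

end Language

theorem DFA.exists_sublist_append_mem_accepts {α σ : Type*} [Fintype σ] (M : DFA α σ)
    {p x : List α} (h : p ++ x ∈ M.accepts) (hlen : Fintype.card σ ≤ x.length) :
    ∃ y, y.Sublist x ∧ y.length < x.length ∧ p ++ y ∈ M.accepts := by
  obtain ⟨q, a, b, c, rfl, -, hb, ha, -, hc⟩ := M.evalFrom_split (s := M.eval p) hlen rfl
  refine ⟨a ++ c, ?_, ?_, ?_⟩
  · rw [List.append_assoc]
    exact (List.sublist_append_right b c).append_left a
  · simpa using List.length_pos_iff.2 hb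
  -- `c` leads from the loop state `q` to the final state of `p ++ x`, so the loop `b` can be cut.
  · rw [DFA.mem_accepts, DFA.eval, DFA.evalFrom_of_append] at h ⊢
    rw [DFA.evalFrom_of_append]
    rwa [show M.evalFrom (M.evalFrom M.start p) a = q from ha, hc]

section Tuplefy

variable {α β : Type*}

open List

theorem length_tuplefy (w : List α) (v : List β) :
    (tuplefy w v).length = max w.length v.length := by
  simp [tuplefy]

theorem map_fst_tuplefy (w : List α) (v : List β) :
    (tuplefy w v).map Prod.fst = w.map some ++ replicate (max w.length v.length - w.length) none := by
  rw [tuplefy, map_map]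
  exact map_getElem?_range (le_max_left _ _)

theorem map_snd_tuplefy (w : List α) (v : List β) :
    (tuplefy w v).map Prod.snd = v.map some ++ replicate (max w.length v.length - v.length) none := by
  rw [tuplefy, map_map]
  exact map_getElem?_range (le_max_right _ _)

theorem map_fst_tuplefy_append_replicate (w : List α) (v : List β) (m : ℕ) :
    (tuplefy w v ++ replicate m (none, none)).map Prod.fst =
      w.map some ++ replicate (max w.length v.length - w.length + m) none := by
  rw [map_append, map_fst_tuplefy, map_replicate, append_assoc, replicate_add]

theorem map_snd_tuplefy_append_replicate (w : List α) (v : List β) (m : ℕ) :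
    (tuplefy w v ++ replicate m (none, none)).map Prod.snd =
      v.map some ++ replicate (max w.length v.length - v.length + m) none := by
  rw [map_append, map_snd_tuplefy, map_replicate, append_assoc, replicate_add]

end Tuplefy

section PaddedExtension

variable {α β : Type*}

open List Language

def tuplefyGraph (f : List α → List β) : Language (Option α × Option β) :=
  {u | ∃ w, tuplefy w (f w) = u}

def paddedWords (α : Type*) (c : ℕ) : Language (Option α) :=
  {v | ∃ w : List α, v = w.map some ++ replicate c none}

open Classical in
noncomputable def paddedExtension (f : List α → List β) (c : ℕ) (v : List (Option α)) :
    List (Option β) :=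
  if v ∈ paddedWords α c then
    (f v.reduceOption).map some ++ replicate (v.length - (f v.reduceOption).length) none
  else replicate v.length none

theorem eq_tuplefy_of_map_fst_eq {f : List α → List β} {u : List (Option α × Option β)}
    (hu : u ∈ tuplefyGraph f) {w : List α} {k : ℕ}
    (h : u.map Prod.fst = w.map some ++ replicate k none) : u = tuplefy w (f w) := by
  obtain ⟨w', rfl⟩ := hu
  rw [map_fst_tuplefy] at h
  obtain rfl : w' = w := by
    simpa [reduceOption_map_some_append_replicate] using congrArg reduceOption h
  rfl

theorem length_le_of_accepts_eq_tuplefyGraph {f : List α → List β} {σ : Type*} [Fintype σ]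
    {M : DFA (Option α × Option β) σ} (hM : M.accepts = tuplefyGraph f) (w : List α) :
    (f w).length ≤ w.length + Fintype.card σ := by
  by_contra! hlong
  set u := tuplefy w (f w)
  have hulen : u.length = (f w).length := by simp only [u, length_tuplefy]; omega
  have hfst : u.map Prod.fst = w.map some ++ replicate ((f w).length - w.length) none := by
    rw [map_fst_tuplefy, max_eq_right (by omega)]
  obtain ⟨y, hyx, hylt, hy⟩ := M.exists_sublist_append_mem_accepts (p := u.take w.length)
    (x := u.drop w.length) (by rw [take_append_drop, hM]; exact ⟨w, rfl⟩)
    (by rw [length_drop]; omega)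
  obtain ⟨n, -, hn⟩ : ∃ n ≤ (f w).length - w.length, y.map Prod.fst = replicate n none := by
    refine sublist_replicate_iff.1 ?_
    simpa [map_drop, hfst] using hyx.map Prod.fst
  have hpy : u.take w.length ++ y = u := by
    refine eq_tuplefy_of_map_fst_eq (hM ▸ hy) (k := n) ?_
    rw [map_append, map_take, hfst, take_left' (by simp), hn]
  have hlen := congrArg length hpy
  rw [length_append, length_take, min_eq_left (by omega)] at hlen
  rw [length_drop] at hylt
  omega

theorem isRegular_paddedWords (α : Type*) (c : ℕ) : (paddedWords α c).IsRegular := by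
  have h : paddedWords α c =
      appendReplicate ({x | ∀ y ∈ x, y.isSome} : Language (Option α)) none ⊓
        {v | v.countP Option.isNone = c} := by
    ext v
    constructor
    · rintro ⟨w, rfl⟩
      refine ⟨⟨w.map some, ?_, c, rfl⟩, ?_⟩
      · show ∀ y ∈ w.map some, y.isSome
        simp
      · show countP _ _ = c
        simp [countP_replicate, Function.comp_def]
    · rintro ⟨⟨x, hx, m, rfl⟩, hc⟩
      obtain ⟨w, rfl⟩ := exists_eq_map_some_of_forall_isSome hx
      have hm : m = c := by simpa [countP_replicate, Function.comp_def] using hc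
      exact ⟨w, by rw [hm]⟩
  rw [h]
  exact ((isRegular_setOf_forall_mem _).appendReplicate none).inf (isRegular_setOf_countP_eq _ c)

theorem length_paddedExtension {f : List α → List β} {c : ℕ}
    (hf : ∀ w, (f w).length ≤ w.length + c) (v : List (Option α)) :
    (paddedExtension f c v).length = v.length := by
  rw [paddedExtension]
  split_ifs with hv
  · obtain ⟨w, rfl⟩ := hv
    have := hf w
    simp only [reduceOption_map_some_append_replicate, length_append, length_map,
      length_replicate]
    omega
  · exact length_replicate

theorem paddedExtension_map_some_append_replicate (f : List α → List β) (c : ℕ) (w : List α) :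
    paddedExtension f c (w.map some ++ replicate c none) =
      (f w).map some ++ replicate (w.length + c - (f w).length) none := by
  rw [paddedExtension, if_pos ⟨w, rfl⟩, reduceOption_map_some_append_replicate]
  simp

theorem map_snd_eq_iff_mem_appendReplicate {f : List α → List β} {c : ℕ}
    (hf : ∀ w, (f w).length ≤ w.length + c) {u : List (Option α × Option β)} {w : List α}
    (hu : u.map Prod.fst = w.map some ++ replicate c none) :
    u.map Prod.snd = (f w).map some ++ replicate (u.length - (f w).length) none ↔
      u ∈ (tuplefyGraph f).appendReplicate (none, none) := by
  have hlen : u.length = w.length + c := by simpa using congrArg length hu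
  have := hf w
  constructor
  · intro hsnd
    refine ⟨tuplefy w (f w), ⟨w, rfl⟩, u.length - max w.length (f w).length, ?_⟩
    apply ext_map_fst_map_snd
    · rw [map_fst_tuplefy_append_replicate, hu]
      congr 2
      omega
    · rw [map_snd_tuplefy_append_replicate, hsnd]
      congr 2
      omega
  · rintro ⟨_, ⟨w', rfl⟩, m, rfl⟩
    rw [map_fst_tuplefy_append_replicate] at hu
    obtain rfl : w' = w := by
      simpa [reduceOption_map_some_append_replicate] using congrArg reduceOption hu
    rw [map_snd_tuplefy_append_replicate, length_append, length_tuplefy, length_replicate]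
    congr 2
    omega

theorem isRegular_graph_paddedExtension {f : List α → List β} {c : ℕ}
    (hreg : (tuplefyGraph f).IsRegular) (hf : ∀ w, (f w).length ≤ w.length + c) :
    IsRegular ({u | u.map Prod.snd = paddedExtension f c (u.map Prod.fst)} :
      Language (Option α × Option β)) := by
  let P : Language (Option α × Option β) := List.map Prod.fst ⁻¹' paddedWords α c
  have hP : P.IsRegular := (isRegular_paddedWords α c).preimage_map Prod.fst
  have h : ({u | u.map Prod.snd = paddedExtension f c (u.map Prod.fst)} :
      Language (Option α × Option β)) =
      ((tuplefyGraph f).appendReplicate (none, none) ⊓ P) +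
        (Pᶜ ⊓ ({u | ∀ p ∈ u, p.2 = none} : Language (Option α × Option β))) := by
    refine Set.ext fun u => ?_
    change u.map Prod.snd = paddedExtension f c (u.map Prod.fst) ↔
      (u ∈ (tuplefyGraph f).appendReplicate (none, none) ∧ u.map Prod.fst ∈ paddedWords α c) ∨
        (u.map Prod.fst ∉ paddedWords α c ∧ ∀ p ∈ u, p.2 = none)
    by_cases hu : u.map Prod.fst ∈ paddedWords α c
    · obtain ⟨w, hw⟩ := id hu
      rw [paddedExtension, if_pos hu, hw, reduceOption_map_some_append_replicate, ← hw,
        length_map, map_snd_eq_iff_mem_appendReplicate hf hw]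
      simp [hu]
    · rw [paddedExtension, if_neg hu, length_map, eq_replicate_iff]
      simp [hu, forall_comm (α := Option β)]
  rw [h]
  exact ((hreg.appendReplicate _).inf hP).add (hP.compl.inf (isRegular_setOf_forall_mem _))

end PaddedExtension

theorem regular_reduces_to_lengthPreserving_general {A G : Type*}
    (f : List A → List G)
    (hreg : ∃ (σ : Type) (_ : Fintype σ) (M : DFA (Option A × Option G) σ),
      M.accepts = { u : List (Option A × Option G) | ∃ w : List A, tuplefy w (f w) = u }) :
    ∃ (c : ℕ) (g : List (Option A) → List (Option G)),
      (∀ v : List (Option A), (g v).length = v.length) ∧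
      (∃ (σ : Type) (_ : Fintype σ) (M : DFA (Option A × Option G) σ),
        M.accepts = { u : List (Option A × Option G) |
          u.map Prod.snd = g (u.map Prod.fst) }) ∧
      ∀ w : List A,
        (f w).length ≤ w.length + c ∧
        g (w.map some ++ List.replicate c none) =
          (f w).map some ++ List.replicate (w.length + c - (f w).length) none := by
  obtain ⟨σ, hσ, M, hM⟩ := hreg
  have hbound := length_le_of_accepts_eq_tuplefyGraph hM
  exact ⟨Fintype.card σ, paddedExtension f _, length_paddedExtension hbound,
    isRegular_graph_paddedExtension ⟨σ, hσ, M, hM⟩ hbound,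
    fun w => ⟨hbound w, paddedExtension_map_some_append_replicate f _ w⟩⟩

/-- Every regular function (in the padded-convolution sense) is, up to
padding with a fixed number of dummy characters, a length-preserving regular
function. -/
theorem regular_reduces_to_lengthPreserving {A G : Type*}
    [Fintype A] [DecidableEq A] [Fintype G] [DecidableEq G]
    (f : List A → List G)
    (hreg : ∃ (σ : Type) (_ : Fintype σ) (M : DFA (Option A × Option G) σ),
      M.accepts = { u : List (Option A × Option G) | ∃ w : List A, tuplefy w (f w) = u }) :
    ∃ (c : ℕ) (g : List (Option A) → List (Option G)),
      (∀ v : List (Option A), (g v).length = v.length) ∧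
      (∃ (σ : Type) (_ : Fintype σ) (M : DFA (Option A × Option G) σ),
        M.accepts = { u : List (Option A × Option G) |
          u.map Prod.snd = g (u.map Prod.fst) }) ∧
      ∀ w : List A,
        (f w).length ≤ w.length + c ∧
        g (w.map some ++ List.replicate c none) =
          (f w).map some ++ List.replicate (w.length + c - (f w).length) none :=
  regular_reduces_to_lengthPreserving_general f hreg
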